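/- arXiv:1107.4624 — 2 statements merged into one kernel-verified Lean document; each statement's English description precedes it below -/
import Mathlib

section
/- Let H be a gadget graph for (G, f, b_1, …, b_n). If H has a vertex cover of size K, then H has a vertex cover of size at most K that is in the following canonical form: it contains exactly the central vertex from each of the f copies of the path on three vertices; from each path P_ij it contains exactly one of the two internal vertices, and the blue endpoint of P_ij adjacent to the non-selected internal vertex belongs to the cover; and for each i, its intersection with V(C^i) ∪ {z_i} is either exactly the set of red vertices of C^i, or exactly {z_i} together with the set of blue vertices of C^i. -/
/-!
Count a vertex cover piece by piece. A cycle on `2 b` vertices needs `b` of them, and a cover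
using exactly `b` alternates, so it is one of the two colour classes; if it also misses the
pendant vertex it must take the red class ("red piece"). A connecting path needs one internal
vertex, and two when both ends are red pieces, since then neither blue endpoint is covered.
The canonical cover makes blue every piece that is not red, and every red piece with a red
neighbour of larger index. These blue pieces cover `G`, so one internal vertex per path
suffices, and the pendant vertex added to a recoloured piece is paid for by the path to that
neighbour, which `S` meets twice.
-/

/-- A set `C` of vertices is a vertex cover of `G` if every edge of `G`
has at least one endpoint in `C`. -/
def IsVertexCover {V : Type*} (G : SimpleGraph V) (C : Set V) : Prop :=
  ∀ ⦃x y : V⦄, G.Adj x y → x ∈ C ∨ y ∈ C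

/-- A gadget graph `H` for `(G, f, b)`.  The pieces are:
* for each vertex `i` of `G`, a cycle `cyc i` on `2 * b i` vertices, colored
  alternately blue (even position) and red (odd position), together with a pendant
  vertex `pend i` whose unique neighbor is the red cycle vertex at position `ρ i`;
* for each edge `{i, j}` of `G`, a three-edge path
  `cyc i (β i j) — inter i j — inter j i — cyc j (β j i)` whose endpoints are blue
  cycle vertices (distinct for distinct paths) and whose internal vertices belong
  to no other piece;
* `f` disjoint copies of the path on three vertices `p3 t 0 — p3 t 1 — p3 t 2`.
These pieces are pairwise disjoint, and `H` has no further vertices or edges. -/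
structure GadgetGraph {n : ℕ} (G : SimpleGraph (Fin n)) (f : ℕ) (b : Fin n → ℕ)
    {W : Type*} (H : SimpleGraph W) where
  cyc : (i : Fin n) → ZMod (2 * b i) → W
  pend : Fin n → W
  inter : (i j : Fin n) → G.Adj i j → W
  p3 : Fin f → Fin 3 → W
  pieces_bij : Function.Bijective
    (fun x : (Σ i : Fin n, ZMod (2 * b i)) ⊕ (Fin n) ⊕
        (Σ' (i : Fin n) (j : Fin n), G.Adj i j) ⊕ (Fin f × Fin 3) =>
      match x with
      | .inl ⟨i, t⟩ => cyc i t
      | .inr (.inl i) => pend i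
      | .inr (.inr (.inl ⟨i, j, h⟩)) => inter i j h
      | .inr (.inr (.inr (t, k))) => p3 t k)
  ρ : (i : Fin n) → ZMod (2 * b i)
  ρ_odd : ∀ i, Odd ((ρ i).val)
  β : (i j : Fin n) → G.Adj i j → ZMod (2 * b i)
  β_even : ∀ i j h, Even ((β i j h).val)
  β_inj : ∀ i j j' (h : G.Adj i j) (h' : G.Adj i j'), β i j h = β i j' h' → j = j'
  adj_iff : ∀ x y : W, H.Adj x y ↔
    ((∃ i t, (x = cyc i t ∧ y = cyc i (t + 1)) ∨ (y = cyc i t ∧ x = cyc i (t + 1))) ∨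
     (∃ i, (x = pend i ∧ y = cyc i (ρ i)) ∨ (y = pend i ∧ x = cyc i (ρ i))) ∨
     (∃ i j h, (x = cyc i (β i j h) ∧ y = inter i j h) ∨
               (y = cyc i (β i j h) ∧ x = inter i j h)) ∨
     (∃ i j h, x = inter i j h ∧ y = inter j i (G.adj_symm h)) ∨
     (∃ t, (x = p3 t 0 ∧ y = p3 t 1) ∨ (y = p3 t 0 ∧ x = p3 t 1) ∨
           (x = p3 t 1 ∧ y = p3 t 2) ∨ (y = p3 t 1 ∧ x = p3 t 2)))

open Finset

theorem Set.ncard_eq_sum_indicator {α : Type*} [Fintype α] (s : Set α) :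
    s.ncard = ∑ a, s.indicator 1 a := by
  classical
  simp [Set.indicator_apply, Finset.sum_boole, Set.ncard_eq_toFinset_card']

theorem Set.ncard_preimage_eq_sum_indicator {α β : Type*} [Fintype α] (f : α → β) (s : Set β) :
    (f ⁻¹' s).ncard = ∑ a, s.indicator 1 (f a) :=
  Set.ncard_eq_sum_indicator _

theorem Finset.sum_sum_eq_sum_sum_Ioi_add {ι M : Type*} [Fintype ι] [LinearOrder ι]
    [LocallyFiniteOrderTop ι] [AddCommMonoid M] (a : ι → ι → M) (ha : ∀ i, a i i = 0) :
    ∑ i, ∑ j, a i j = ∑ i, ∑ j ∈ Ioi i, (a i j + a j i) := by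
  have hsplit : ∀ i j, a i j = (if i < j then a i j else 0) + (if j < i then a i j else 0) := by
    intro i j
    rcases lt_trichotomy i j with h | rfl | h
    · simp [h, h.not_gt]
    · simp [ha]
    · simp [h, h.not_gt]
  calc ∑ i, ∑ j, a i j
      = ∑ i, ∑ j, (if i < j then a i j else 0) + ∑ j, ∑ i, (if j < i then a i j else 0) := by
        rw [sum_comm (f := fun j i => if j < i then a i j else 0), ← sum_add_distrib]
        simp_rw [← sum_add_distrib, ← hsplit]
    _ = ∑ i, ∑ j ∈ Ioi i, (a i j + a j i) := by
        simp_rw [← sum_add_distrib, ← ite_add_zero, ← sum_filter, filter_lt_eq_Ioi]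

namespace ZMod

theorem forall_of_add_one {N : ℕ} [NeZero N] {P : ZMod N → Prop} {a : ZMod N} (ha : P a)
    (h : ∀ t, P t → P (t + 1)) (t : ZMod N) : P t := by
  have key : ∀ k : ℕ, P (a + k) := by
    intro k
    induction k with
    | zero => simpa using ha
    | succ k ih => simpa [add_assoc] using h _ ih
  simpa using key (t - a).val

section Cover

variable {N : ℕ}

theorem two_mul_ncard_eq_sum_indicator [NeZero N] (C : Set (ZMod N)) :
    2 * C.ncard = ∑ t, (C.indicator 1 t + C.indicator 1 (t + 1)) := by
  rw [sum_add_distrib, Fintype.sum_equiv (Equiv.addRight 1) (fun t => C.indicator 1 (t + 1))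
    (C.indicator 1) (fun _ => rfl), ← Set.ncard_eq_sum_indicator, two_mul]

theorem one_le_indicator_add {C : Set (ZMod N)} (hC : ∀ t, t ∈ C ∨ t + 1 ∈ C) (t : ZMod N) :
    1 ≤ C.indicator 1 t + C.indicator 1 (t + 1) := by
  rcases hC t with h | h <;> simp [Set.indicator_of_mem h]

theorem le_two_mul_ncard [NeZero N] {C : Set (ZMod N)} (hC : ∀ t, t ∈ C ∨ t + 1 ∈ C) :
    N ≤ 2 * C.ncard := by
  rw [two_mul_ncard_eq_sum_indicator]
  calc N = ∑ _t : ZMod N, 1 := by simp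
    _ ≤ _ := sum_le_sum fun t _ => one_le_indicator_add hC t

theorem mem_iff_add_one_notMem [NeZero N] {C : Set (ZMod N)} (hC : ∀ t, t ∈ C ∨ t + 1 ∈ C)
    (hcard : 2 * C.ncard ≤ N) (t : ZMod N) : t ∈ C ↔ t + 1 ∉ C := by
  have hsum : ∑ t, (C.indicator 1 t + C.indicator 1 (t + 1)) = ∑ _t : ZMod N, 1 := by
    refine le_antisymm ?_ (sum_le_sum fun t _ => one_le_indicator_add hC t)
    simpa [← two_mul_ncard_eq_sum_indicator] using hcard
  have ht := (sum_eq_sum_iff_of_le (fun t _ => one_le_indicator_add hC t)).1 hsum.symm t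
    (mem_univ t)
  by_cases h : t ∈ C <;> by_cases h' : t + 1 ∈ C <;> simp [h, h'] at ht ⊢

end Cover

variable {m : ℕ} [NeZero m]

theorem odd_val_add_one_iff (t : ZMod (2 * m)) : Odd (t + 1).val ↔ ¬ Odd t.val := by
  have : Fact (1 < 2 * m) := ⟨by have := NeZero.pos m; omega⟩
  rw [ZMod.val_add, ZMod.val_one, Nat.odd_iff, Nat.odd_iff,
    Nat.mod_mod_of_dvd _ (dvd_mul_right 2 m)]
  omega

theorem ncard_setOf_odd_val : {t : ZMod (2 * m) | Odd t.val}.ncard = m := by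
  have hshift : (· + 1) ⁻¹' {t : ZMod (2 * m) | Odd t.val} = {t | Odd t.val}ᶜ := by
    ext t
    simp [odd_val_add_one_iff]
  have := Set.ncard_add_ncard_compl {t : ZMod (2 * m) | Odd t.val}
  rw [← hshift, Set.ncard_preimage_of_injective_subset_range (add_left_injective 1)
    (fun t _ => add_right_surjective 1 t), Nat.card_zmod] at this
  omega

theorem ncard_setOf_even_val : {t : ZMod (2 * m) | Even t.val}.ncard = m := by
  have := Set.ncard_add_ncard_compl {t : ZMod (2 * m) | Odd t.val}
  simp only [Set.compl_ofPred, Nat.not_odd_iff_even, ncard_setOf_odd_val, Nat.card_zmod] at this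
  omega

theorem mem_iff_odd_val_of_cover {C : Set (ZMod (2 * m))} (hC : ∀ t, t ∈ C ∨ t + 1 ∈ C)
    (hcard : C.ncard ≤ m) {ρ : ZMod (2 * m)} (hρ : ρ ∈ C) (hρ_odd : Odd ρ.val) (t : ZMod (2 * m)) :
    t ∈ C ↔ Odd t.val := by
  have halt := mem_iff_add_one_notMem hC (by omega)
  refine forall_of_add_one (P := fun t => t ∈ C ↔ Odd t.val) (iff_of_true hρ hρ_odd) ?_ t
  intro s hs
  have := halt s
  rw [odd_val_add_one_iff]
  tauto

end ZMod

namespace GadgetGraph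

variable {n : ℕ} {G : SimpleGraph (Fin n)} {f : ℕ} {b : Fin n → ℕ} {W : Type*}
  {H : SimpleGraph W} (gg : GadgetGraph G f b H)

variable (G f b) in
abbrev Index : Type :=
  (Σ i : Fin n, ZMod (2 * b i)) ⊕ Fin n ⊕ (Σ' (i : Fin n) (j : Fin n), G.Adj i j) ⊕
    (Fin f × Fin 3)

def vertex : Index G f b → W
  | .inl ⟨i, t⟩ => gg.cyc i t
  | .inr (.inl i) => gg.pend i
  | .inr (.inr (.inl ⟨i, j, h⟩)) => gg.inter i j h
  | .inr (.inr (.inr (t, k))) => gg.p3 t k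

theorem bijective_vertex : Function.Bijective gg.vertex := gg.pieces_bij

noncomputable def pieceCard (X : Set W) (i : Fin n) : ℕ :=
  (gg.cyc i ⁻¹' X).ncard + X.indicator 1 (gg.pend i)

open Classical in
noncomputable def pathCard (X : Set W) (i j : Fin n) : ℕ :=
  if h : G.Adj i j then X.indicator 1 (gg.inter i j h) + X.indicator 1 (gg.inter j i h.symm)
  else 0

noncomputable def p3Card (X : Set W) (t : Fin f) : ℕ := (gg.p3 t ⁻¹' X).ncard

theorem ncard_eq_sum [∀ i, NeZero (b i)] (X : Set W) :
    X.ncard = ∑ i, (gg.pieceCard X i + ∑ j ∈ Ioi i, gg.pathCard X i j) + ∑ t, gg.p3Card X t := by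
  classical
  let single (i j : Fin n) : ℕ := if h : G.Adj i j then X.indicator 1 (gg.inter i j h) else 0
  have hinter : ∑ x : Σ' (i : Fin n) (j : Fin n), G.Adj i j,
      X.indicator 1 (gg.inter x.1 x.2.1 x.2.2) = ∑ i, ∑ j ∈ Ioi i, gg.pathCard X i j := by
    rw [Fintype.sum_of_injective (fun x => (x.1, x.2.1)) ?_ _ (fun p => single p.1 p.2) ?_ ?_,
      Fintype.sum_prod_type, sum_sum_eq_sum_sum_Ioi_add single (fun i => by simp [single])]
    · refine sum_congr rfl fun i _ => sum_congr rfl fun j _ => ?_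
      by_cases h : G.Adj i j <;> simp [single, pathCard, h, G.adj_comm j i]
    · rintro ⟨i, j, h⟩ ⟨i', j', h'⟩ he
      simp only [Prod.mk.injEq] at he
      obtain ⟨rfl, rfl⟩ := he
      rfl
    · rintro ⟨i, j⟩ hij
      simp only [single, dite_eq_right_iff]
      exact fun h => absurd ⟨⟨i, j, h⟩, rfl⟩ hij
    · rintro ⟨i, j, h⟩
      simp [single, h]
  rw [← Set.ncard_preimage_of_injective_subset_range gg.bijective_vertex.1
      (fun w _ => gg.bijective_vertex.2 w), Set.ncard_preimage_eq_sum_indicator,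
    Fintype.sum_sum_type, Fintype.sum_sum_type, Fintype.sum_sum_type, Fintype.sum_sigma,
    Fintype.sum_prod_type]
  simp only [vertex, hinter, pieceCard, p3Card, Set.ncard_preimage_eq_sum_indicator,
    sum_add_distrib]
  ring

theorem adj_cyc (i : Fin n) (t : ZMod (2 * b i)) : H.Adj (gg.cyc i t) (gg.cyc i (t + 1)) :=
  (gg.adj_iff _ _).2 (Or.inl ⟨i, t, Or.inl ⟨rfl, rfl⟩⟩)

theorem adj_pend (i : Fin n) : H.Adj (gg.pend i) (gg.cyc i (gg.ρ i)) :=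
  (gg.adj_iff _ _).2 (Or.inr (Or.inl ⟨i, Or.inl ⟨rfl, rfl⟩⟩))

theorem adj_cyc_inter {i j : Fin n} (h : G.Adj i j) :
    H.Adj (gg.cyc i (gg.β i j h)) (gg.inter i j h) :=
  (gg.adj_iff _ _).2 (Or.inr (Or.inr (Or.inl ⟨i, j, h, Or.inl ⟨rfl, rfl⟩⟩)))

theorem adj_inter {i j : Fin n} (h : G.Adj i j) : H.Adj (gg.inter i j h) (gg.inter j i h.symm) :=
  (gg.adj_iff _ _).2 (Or.inr (Or.inr (Or.inr (Or.inl ⟨i, j, h, rfl, rfl⟩))))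

theorem adj_p3 (t : Fin f) : H.Adj (gg.p3 t 0) (gg.p3 t 1) :=
  (gg.adj_iff _ _).2 (Or.inr (Or.inr (Or.inr (Or.inr ⟨t, Or.inl ⟨rfl, rfl⟩⟩))))

def IsRedOn (S : Set W) (i : Fin n) : Prop :=
  gg.pend i ∉ S ∧ ∀ t, gg.cyc i t ∈ S ↔ Odd t.val

section Cover

variable {gg} {S : Set W}

theorem le_ncard_preimage_cyc (hS : IsVertexCover H S) (i : Fin n) [NeZero (b i)] :
    b i ≤ (gg.cyc i ⁻¹' S).ncard := by
  have := ZMod.le_two_mul_ncard (C := gg.cyc i ⁻¹' S) fun t => hS (gg.adj_cyc i t)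
  omega

theorem le_pieceCard (hS : IsVertexCover H S) (i : Fin n) [NeZero (b i)] :
    b i ≤ gg.pieceCard S i :=
  (le_ncard_preimage_cyc hS i).trans (Nat.le_add_right _ _)

theorem succ_le_pieceCard (hS : IsVertexCover H S) {i : Fin n} [NeZero (b i)]
    (hi : ¬ gg.IsRedOn S i) : b i + 1 ≤ gg.pieceCard S i := by
  by_cases hpend : gg.pend i ∈ S
  · have := le_ncard_preimage_cyc (gg := gg) hS i
    rw [pieceCard, Set.indicator_of_mem hpend, Pi.one_apply]
    omega
  · by_contra! hsmall
    have hρ : gg.cyc i (gg.ρ i) ∈ S := (hS (gg.adj_pend i)).resolve_left hpend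
    refine hi ⟨hpend, ZMod.mem_iff_odd_val_of_cover (C := gg.cyc i ⁻¹' S)
      (fun t => hS (gg.adj_cyc i t)) ?_ hρ (gg.ρ_odd i)⟩
    rw [pieceCard, Set.indicator_of_notMem hpend] at hsmall
    omega

theorem inter_mem_of_isRedOn (hS : IsVertexCover H S) {i j : Fin n} (h : G.Adj i j)
    (hi : gg.IsRedOn S i) : gg.inter i j h ∈ S := by
  refine (hS (gg.adj_cyc_inter h)).resolve_left ?_
  rw [hi.2, Nat.not_odd_iff_even]
  exact gg.β_even i j h

theorem one_le_pathCard (hS : IsVertexCover H S) {i j : Fin n} (h : G.Adj i j) :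
    1 ≤ gg.pathCard S i j := by
  rcases hS (gg.adj_inter h) with h' | h' <;> simp [pathCard, h, Set.indicator_of_mem h']

theorem pathCard_eq_two (hS : IsVertexCover H S) {i j : Fin n} (h : G.Adj i j)
    (hi : gg.IsRedOn S i) (hj : gg.IsRedOn S j) : gg.pathCard S i j = 2 := by
  simp [pathCard, h, Set.indicator_of_mem (inter_mem_of_isRedOn hS h hi),
    Set.indicator_of_mem (inter_mem_of_isRedOn hS h.symm hj)]

theorem one_le_p3Card (hS : IsVertexCover H S) (t : Fin f) : 1 ≤ gg.p3Card S t := by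
  rw [p3Card, Nat.one_le_iff_ne_zero, Ne, Set.ncard_eq_zero]
  rcases hS (gg.adj_p3 t) with h | h
  exacts [Set.nonempty_of_mem (x := 0) h |>.ne_empty, Set.nonempty_of_mem (x := 1) h |>.ne_empty]

end Cover

section Canonical

-- Whether the canonical cover takes `inter i j`, the internal vertex next to piece `i`.
def PathPick (B : Set (Fin n)) (i j : Fin n) : Prop := i ∉ B ∨ (j ∈ B ∧ j < i)

theorem pathPick_iff_not {B : Set (Fin n)} {i j : Fin n} (hB : i ∈ B ∨ j ∈ B) (hij : i ≠ j) :
    PathPick B i j ↔ ¬ PathPick B j i := by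
  unfold PathPick
  rcases lt_or_gt_of_ne hij with h | h <;> have := lt_asymm h <;> tauto

def canonicalIndex (B : Set (Fin n)) : Set (Index G f b)
  | .inl ⟨i, t⟩ => Even t.val ↔ i ∈ B
  | .inr (.inl i) => i ∈ B
  | .inr (.inr (.inl ⟨i, j, _⟩)) => PathPick B i j
  | .inr (.inr (.inr (_, k))) => k = 1

def canonicalCover (B : Set (Fin n)) : Set W := gg.vertex '' canonicalIndex B

variable {gg} {B : Set (Fin n)}

theorem cyc_mem_canonicalCover {i : Fin n} {t : ZMod (2 * b i)} :
    gg.cyc i t ∈ gg.canonicalCover B ↔ (Even t.val ↔ i ∈ B) :=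
  gg.bijective_vertex.1.mem_set_image (a := .inl ⟨i, t⟩)

theorem pend_mem_canonicalCover {i : Fin n} : gg.pend i ∈ gg.canonicalCover B ↔ i ∈ B :=
  gg.bijective_vertex.1.mem_set_image (a := .inr (.inl i))

theorem inter_mem_canonicalCover {i j : Fin n} {h : G.Adj i j} :
    gg.inter i j h ∈ gg.canonicalCover B ↔ PathPick B i j :=
  gg.bijective_vertex.1.mem_set_image (a := .inr (.inr (.inl ⟨i, j, h⟩)))

theorem p3_mem_canonicalCover {t : Fin f} {k : Fin 3} :
    gg.p3 t k ∈ gg.canonicalCover B ↔ k = 1 :=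
  gg.bijective_vertex.1.mem_set_image (a := .inr (.inr (.inr (t, k))))

theorem isVertexCover_canonicalCover [∀ i, NeZero (b i)]
    (hB : IsVertexCover G B) : IsVertexCover H (gg.canonicalCover B) := by
  have hcyc : ∀ i (t : ZMod (2 * b i)),
      gg.cyc i t ∈ gg.canonicalCover B ∨ gg.cyc i (t + 1) ∈ gg.canonicalCover B := by
    intro i t
    simp only [cyc_mem_canonicalCover, ← Nat.not_odd_iff_even, ZMod.odd_val_add_one_iff]
    tauto
  have hpend : ∀ i, gg.pend i ∈ gg.canonicalCover B ∨ gg.cyc i (gg.ρ i) ∈ gg.canonicalCover B := by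
    intro i
    rw [pend_mem_canonicalCover, cyc_mem_canonicalCover, ← Nat.not_odd_iff_even]
    have := gg.ρ_odd i
    tauto
  have hend : ∀ i j (h : G.Adj i j),
      gg.cyc i (gg.β i j h) ∈ gg.canonicalCover B ∨ gg.inter i j h ∈ gg.canonicalCover B := by
    intro i j h
    rw [cyc_mem_canonicalCover, inter_mem_canonicalCover, PathPick]
    have := gg.β_even i j h
    tauto
  have hmid : ∀ i j (h : G.Adj i j),
      gg.inter i j h ∈ gg.canonicalCover B ∨ gg.inter j i h.symm ∈ gg.canonicalCover B := by
    intro i j h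
    rw [inter_mem_canonicalCover, inter_mem_canonicalCover, pathPick_iff_not (hB h) h.ne]
    exact (em _).symm
  intro x y hxy
  rw [gg.adj_iff] at hxy
  rcases hxy with ⟨i, t, ⟨rfl, rfl⟩ | ⟨rfl, rfl⟩⟩ | ⟨i, ⟨rfl, rfl⟩ | ⟨rfl, rfl⟩⟩ |
    ⟨i, j, h, ⟨rfl, rfl⟩ | ⟨rfl, rfl⟩⟩ | ⟨i, j, h, rfl, rfl⟩ |
    ⟨t, ⟨rfl, rfl⟩ | ⟨rfl, rfl⟩ | ⟨rfl, rfl⟩ | ⟨rfl, rfl⟩⟩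
  · exact hcyc i t
  · exact (hcyc i t).symm
  · exact hpend i
  · exact (hpend i).symm
  · exact hend i j h
  · exact (hend i j h).symm
  · exact hmid i j h
  all_goals simp [p3_mem_canonicalCover]

theorem pieceCard_canonicalCover {i : Fin n} [NeZero (b i)] :
    gg.pieceCard (gg.canonicalCover B) i = b i + B.indicator 1 i := by
  have hcyc : gg.cyc i ⁻¹' gg.canonicalCover B = {t | Even t.val ↔ i ∈ B} :=
    Set.ext fun _ => cyc_mem_canonicalCover
  by_cases hi : i ∈ B
  · simp [pieceCard, hcyc, hi, pend_mem_canonicalCover, ZMod.ncard_setOf_even_val]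
  · simp [pieceCard, hcyc, hi, pend_mem_canonicalCover, ZMod.ncard_setOf_odd_val]

theorem pathCard_canonicalCover (hB : IsVertexCover G B) {i j : Fin n}
    (h : G.Adj i j) : gg.pathCard (gg.canonicalCover B) i j = 1 := by
  by_cases hp : PathPick B i j
  · have hp' := (pathPick_iff_not (hB h) h.ne).1 hp
    simp [pathCard, h, inter_mem_canonicalCover, hp, hp']
  · have hp' : PathPick B j i := by
      rw [pathPick_iff_not (hB h.symm) h.symm.ne]; tauto
    simp [pathCard, h, inter_mem_canonicalCover, hp, hp']

theorem p3Card_canonicalCover {t : Fin f} : gg.p3Card (gg.canonicalCover B) t = 1 := by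
  have : gg.p3 t ⁻¹' gg.canonicalCover B = {1} := Set.ext fun _ => p3_mem_canonicalCover
  rw [p3Card, this, Set.ncard_singleton]

end Canonical

def blueSet (S : Set W) : Set (Fin n) :=
  {i | ¬ gg.IsRedOn S i ∨ ∃ j, G.Adj i j ∧ i < j ∧ gg.IsRedOn S j}

theorem isVertexCover_blueSet (S : Set W) : IsVertexCover G (gg.blueSet S) := by
  intro i j h
  by_contra! hij
  simp only [blueSet, Set.mem_ofPred_eq, not_or, not_not, not_exists, not_and] at hij
  rcases lt_or_gt_of_ne h.ne with hlt | hlt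
  · exact hij.1.2 j h hlt hij.2.1
  · exact hij.2.2 i h.symm hlt hij.1.1

variable {gg} {S : Set W}

theorem pieceCard_add_sum_pathCard_canonicalCover_le (hS : IsVertexCover H S) (i : Fin n)
    [NeZero (b i)] :
    gg.pieceCard (gg.canonicalCover (gg.blueSet S)) i +
        ∑ j ∈ Ioi i, gg.pathCard (gg.canonicalCover (gg.blueSet S)) i j ≤
      gg.pieceCard S i + ∑ j ∈ Ioi i, gg.pathCard S i j := by
  have hpath : ∀ j ∈ Ioi i,
      gg.pathCard (gg.canonicalCover (gg.blueSet S)) i j ≤ gg.pathCard S i j := by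
    intro j _
    by_cases h : G.Adj i j
    · rw [pathCard_canonicalCover (gg.isVertexCover_blueSet S) h]
      exact one_le_pathCard hS h
    · simp [pathCard, h]
  rw [pieceCard_canonicalCover]
  by_cases hred : gg.IsRedOn S i
  · by_cases hup : ∃ j, G.Adj i j ∧ i < j ∧ gg.IsRedOn S j
    · obtain ⟨j, h, hij, hj⟩ := hup
      have hsum := sum_lt_sum hpath ⟨j, mem_Ioi.2 hij, by
        rw [pathCard_canonicalCover (gg.isVertexCover_blueSet S) h, pathCard_eq_two hS h hred hj]
        norm_num⟩
      have hi : i ∈ gg.blueSet S := Or.inr ⟨j, h, hij, hj⟩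
      have := le_pieceCard (gg := gg) hS i
      rw [Set.indicator_of_mem hi, Pi.one_apply]
      omega
    · have hi : i ∉ gg.blueSet S := by simp [blueSet, hred, hup]
      rw [Set.indicator_of_notMem hi]
      exact add_le_add (le_pieceCard hS i) (sum_le_sum hpath)
  · have hi : i ∈ gg.blueSet S := Or.inl hred
    rw [Set.indicator_of_mem hi, Pi.one_apply]
    exact add_le_add (succ_le_pieceCard hS hred) (sum_le_sum hpath)

theorem ncard_canonicalCover_le [∀ i, NeZero (b i)] (hS : IsVertexCover H S) :
    (gg.canonicalCover (gg.blueSet S)).ncard ≤ S.ncard := by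
  rw [gg.ncard_eq_sum, gg.ncard_eq_sum S]
  refine add_le_add (sum_le_sum fun i _ => pieceCard_add_sum_pathCard_canonicalCover_le hS i)
    (sum_le_sum fun t _ => ?_)
  rw [p3Card_canonicalCover]
  exact one_le_p3Card hS t

end GadgetGraph

theorem stmt2_general {n : ℕ} (G : SimpleGraph (Fin n))
    (f : ℕ) (b : Fin n → ℕ) {W : Type*} (H : SimpleGraph W)
    (hb2 : ∀ i, 2 ≤ b i)
    (gg : GadgetGraph G f b H)
    (S : Set W) (hS : IsVertexCover H S) (K : ℕ) (hK : S.ncard = K) :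
    ∃ S' : Set W, IsVertexCover H S' ∧ S'.ncard ≤ K ∧
      (∀ (t : Fin f) (l : Fin 3), gg.p3 t l ∈ S' ↔ l = 1) ∧
      (∀ i j (h : G.Adj i j), (gg.inter i j h ∈ S' ↔ gg.inter j i (G.adj_symm h) ∉ S')) ∧
      (∀ i j (h : G.Adj i j), gg.inter i j h ∉ S' → gg.cyc i (gg.β i j h) ∈ S') ∧
      (∀ i : Fin n,
        ((∀ t, (gg.cyc i t ∈ S' ↔ Odd t.val)) ∧ gg.pend i ∉ S') ∨
        ((∀ t, (gg.cyc i t ∈ S' ↔ Even t.val)) ∧ gg.pend i ∈ S')) := by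
  have : ∀ i, NeZero (b i) := fun i => ⟨by have := hb2 i; omega⟩
  open GadgetGraph in
  refine ⟨gg.canonicalCover (gg.blueSet S),
    isVertexCover_canonicalCover (gg.isVertexCover_blueSet S), hK ▸ ncard_canonicalCover_le hS,
    fun t l => p3_mem_canonicalCover, fun i j h => ?_, fun i j h hij => ?_, fun i => ?_⟩
  · rw [inter_mem_canonicalCover, inter_mem_canonicalCover]
    exact pathPick_iff_not (gg.isVertexCover_blueSet S h) h.ne
  · rw [inter_mem_canonicalCover, PathPick, not_or, not_not] at hij
    exact cyc_mem_canonicalCover.2 (iff_of_true (gg.β_even i j h) hij.1)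
  · by_cases hi : i ∈ gg.blueSet S
    · refine .inr ⟨fun t => ?_, pend_mem_canonicalCover.2 hi⟩
      simp [cyc_mem_canonicalCover, hi]
    · refine .inl ⟨fun t => ?_, mt pend_mem_canonicalCover.1 hi⟩
      simp [cyc_mem_canonicalCover, hi]

/-- If a gadget graph `H` for `(G, f, b)` has a vertex cover of size
`K`, then it has a vertex cover of size at most `K` in canonical form: it contains
exactly the central vertex of each copy of the 3-vertex path; exactly one internal
vertex from each path, the blue endpoint adjacent to the non-selected internal vertex
being in the cover; and from each cycle-plus-pendant piece either exactly the red
vertices, or exactly the pendant vertex together with the blue vertices. -/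
theorem stmt2 {n : ℕ} (G : SimpleGraph (Fin n)) [DecidableRel G.Adj]
    (f : ℕ) (b : Fin n → ℕ) {W : Type*} (H : SimpleGraph W)
    (hniso : ∀ i : Fin n, ∃ j, G.Adj i j)
    (hb2 : ∀ i, 2 ≤ b i)
    (hbdeg : ∀ i, b i = G.degree i ∨ b i = G.degree i + 1 ∨ b i = G.degree i + 2)
    (gg : GadgetGraph G f b H)
    (S : Set W) (hS : IsVertexCover H S) (K : ℕ) (hK : S.ncard = K) :
    ∃ S' : Set W, IsVertexCover H S' ∧ S'.ncard ≤ K ∧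
      (∀ (t : Fin f) (l : Fin 3), gg.p3 t l ∈ S' ↔ l = 1) ∧
      (∀ i j (h : G.Adj i j), (gg.inter i j h ∈ S' ↔ gg.inter j i (G.adj_symm h) ∉ S')) ∧
      (∀ i j (h : G.Adj i j), gg.inter i j h ∉ S' → gg.cyc i (gg.β i j h) ∈ S') ∧
      (∀ i : Fin n,
        ((∀ t, (gg.cyc i t ∈ S' ↔ Odd t.val)) ∧ gg.pend i ∉ S') ∨
        ((∀ t, (gg.cyc i t ∈ S' ↔ Even t.val)) ∧ gg.pend i ∈ S')) :=
  stmt2_general G f b H hb2 gg S hS K hK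
end

section
/- Let H be a gadget graph for (G, f, b_1, …, b_n) and let k be a natural number. Then G has a vertex cover of size at most k if and only if H has a vertex cover of size at most k + f + m + Σ_{i=1}^n b_i. -/
namespace ZMod

open Finset

variable {N : ℕ} [NeZero N]

theorem mem_iff_even_val_iff_of_forall_add_one_mem_iff {T : Finset (ZMod N)}
    (hT : ∀ t, t + 1 ∈ T ↔ t ∉ T) (x : ZMod N) : x ∈ T ↔ (Even x.val ↔ 0 ∈ T) := by
  have key : ∀ m : ℕ, (m : ZMod N) ∈ T ↔ (Even m ↔ 0 ∈ T) := by
    intro m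
    induction m with
    | zero => simp
    | succ m ih => rw [Nat.cast_succ, hT, ih, Nat.even_add_one]; tauto
  simpa using key x.val

theorem map_compl_add_one_subset {T : Finset (ZMod N)} (hT : ∀ t, t ∈ T ∨ t + 1 ∈ T) :
    Tᶜ.map (Equiv.addRight 1).toEmbedding ⊆ T := by
  intro x hx
  rw [mem_map_equiv, mem_compl] at hx
  simpa using (hT _).resolve_left hx

variable {b : ℕ} [NeZero b]

theorem even_val_add_one_iff (t : ZMod (2 * b)) : Even (t + 1).val ↔ ¬Even t.val := by
  have : Fact (1 < 2 * b) := ⟨by have := NeZero.ne b; omega⟩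
  rw [val_add, val_one, Nat.even_iff, Nat.mod_mod_of_dvd _ (dvd_mul_right 2 b),
    ← Nat.even_iff, Nat.even_add_one]

theorem le_card_of_forall_mem_or_add_one_mem {T : Finset (ZMod (2 * b))}
    (hT : ∀ t, t ∈ T ∨ t + 1 ∈ T) : b ≤ #T := by
  have := card_le_card (map_compl_add_one_subset hT)
  rw [card_map] at this
  have := card_add_card_compl T; rw [ZMod.card] at this
  omega

theorem add_one_mem_iff_of_card_le {T : Finset (ZMod (2 * b))}
    (hT : ∀ t, t ∈ T ∨ t + 1 ∈ T) (hcard : #T ≤ b) (t : ZMod (2 * b)) :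
    t + 1 ∈ T ↔ t ∉ T := by
  have hmap := eq_of_subset_of_card_le (map_compl_add_one_subset hT) (by
    have := card_add_card_compl T; rw [ZMod.card] at this
    rw [card_map]; omega)
  conv_lhs => rw [← hmap]
  simp only [mem_map_equiv, Equiv.addRight_symm, Equiv.coe_addRight, add_neg_cancel_right,
    mem_compl]

theorem card_eq_of_forall_add_one_mem_iff {T : Finset (ZMod (2 * b))}
    (hT : ∀ t, t + 1 ∈ T ↔ t ∉ T) : #T = b := by
  have hmap : T.map (Equiv.addRight 1).toEmbedding = Tᶜ := by
    ext x
    have := hT (x - 1)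
    rw [sub_add_cancel] at this
    simp only [mem_map_equiv, mem_compl, Equiv.addRight_symm, Equiv.coe_addRight,
      ← sub_eq_add_neg]
    tauto
  have := card_add_card_compl T; rw [ZMod.card] at this
  rw [← hmap, card_map] at this
  omega

theorem card_filter_even_val : #{t : ZMod (2 * b) | Even t.val} = b :=
  card_eq_of_forall_add_one_mem_iff fun t => by
    simp only [mem_filter, mem_univ, true_and, even_val_add_one_iff]

theorem card_filter_not_even_val : #{t : ZMod (2 * b) | ¬Even t.val} = b :=
  card_eq_of_forall_add_one_mem_iff fun t => by
    simp only [mem_filter, mem_univ, true_and, even_val_add_one_iff]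

end ZMod

namespace SimpleGraph

open Finset

theorem isVertexCover_union_image_inf {V : Type*} [LinearOrder V] {G : SimpleGraph V}
    {L : Finset V} {D : Finset (Sym2 V)}
    (hD : ∀ i j, G.Adj i j → i ∉ L → j ∉ L → s(i, j) ∈ D) :
    _root_.IsVertexCover G ↑(L ∪ D.image Sym2.inf) := by
  intro i j hij
  by_cases hi : i ∈ L
  · exact .inl (mem_union_left _ hi)
  by_cases hj : j ∈ L
  · exact .inr (mem_union_left _ hj)
  have := mem_image_of_mem Sym2.inf (hD i j hij hi hj)
  rw [Sym2.inf_mk] at this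
  rcases min_choice i j with h | h <;> rw [h] at this
  exacts [.inl (mem_union_right _ this), .inr (mem_union_right _ this)]

variable {V : Type*} [Fintype V] {G : SimpleGraph V} [DecidableRel G.Adj]

theorem card_le_card_edgeFinset_of_forall_symm_notMem {A : Finset G.Dart}
    (hA : ∀ d ∈ A, d.symm ∉ A) : #A ≤ #G.edgeFinset :=
  card_le_card_of_injOn Dart.edge (fun d _ => mem_edgeFinset.2 d.edge_mem)
    fun d hd d' hd' he => ((dart_edge_eq_iff d d').1 he).resolve_right fun h => hA d' hd' (h ▸ hd)

theorem card_edgeFinset_add_card_filter_le [DecidableEq V] {I : Finset G.Dart}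
    (hI : ∀ d, d ∈ I ∨ d.symm ∈ I) :
    #G.edgeFinset + #{e ∈ G.edgeFinset | ∀ d : G.Dart, d.edge = e → d ∈ I} ≤ #I := by
  rw [card_eq_sum_card_fiberwise (f := Dart.edge) (t := G.edgeFinset)
    fun d _ => mem_edgeFinset.2 d.edge_mem, card_eq_sum_ones, card_filter, ← sum_add_distrib]
  refine sum_le_sum fun e he => ?_
  induction e using Sym2.ind with
  | _ u v =>
  let d : G.Dart := ⟨(u, v), mem_edgeFinset.1 he⟩
  have hedge : ∀ d' ∈ ({d, d.symm} : Finset G.Dart), d'.edge = s(u, v) := by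
    intro d' hd'
    rcases mem_insert.1 hd' with rfl | hd'
    · rfl
    · rw [mem_singleton.1 hd', Dart.edge_symm]
      rfl
  split_ifs with hboth
  · calc 1 + 1 = #({d, d.symm} : Finset G.Dart) := (card_pair d.symm_ne.symm).symm
      _ ≤ _ := card_le_card fun d' hd' =>
        mem_filter.2 ⟨hboth d' (hedge d' hd'), hedge d' hd'⟩
  · obtain ⟨d', hd', hd'I⟩ : ∃ d' ∈ ({d, d.symm} : Finset G.Dart), d' ∈ I := by
      rcases hI d with h | h
      exacts [⟨d, by simp, h⟩, ⟨d.symm, by simp, h⟩]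
    exact card_pos.2 ⟨d', mem_filter.2 ⟨hd'I, hedge d' hd'⟩⟩

end SimpleGraph

namespace GadgetGraph

open Finset

variable {n f : ℕ} {G : SimpleGraph (Fin n)} {b : Fin n → ℕ} {W : Type*} {H : SimpleGraph W}
  (gg : GadgetGraph G f b H)

abbrev Piece (G : SimpleGraph (Fin n)) (f : ℕ) (b : Fin n → ℕ) : Type :=
  (Σ i : Fin n, ZMod (2 * b i)) ⊕ Fin n ⊕ (Σ' (i : Fin n) (j : Fin n), G.Adj i j) ⊕
    (Fin f × Fin 3)

noncomputable def pieceEquiv : Piece G f b ≃ W := Equiv.ofBijective _ gg.pieces_bij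

theorem Piece.card_filter [∀ i, NeZero (b i)] [DecidableRel G.Adj] (p : Piece G f b → Prop)
    [DecidablePred p] :
    #{x | p x} = ∑ i, (#{t | p (.inl ⟨i, t⟩)} + if p (.inr (.inl i)) then 1 else 0) +
      #{d : G.Dart | p (.inr (.inr (.inl ⟨d.fst, d.snd, d.adj⟩)))} +
      ∑ t, #{a | p (.inr (.inr (.inr (t, a))))} := by
  let dartEquiv : G.Dart ≃ Σ' (i : Fin n) (j : Fin n), G.Adj i j :=
    { toFun := fun d => ⟨d.fst, d.snd, d.adj⟩
      invFun := fun q => ⟨(q.1, q.2.1), q.2.2⟩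
      left_inv := fun _ => rfl
      right_inv := fun _ => rfl }
  simp only [Finset.card_filter, Fintype.sum_sum_type, Fintype.sum_sigma, Fintype.sum_prod_type,
    sum_add_distrib, add_assoc]
  congr 3
  exact (Fintype.sum_equiv dartEquiv _ _ fun _ => rfl).symm

theorem ncard_eq [∀ i, NeZero (b i)] [DecidableRel G.Adj] (S : Set W) [DecidablePred (· ∈ S)] :
    S.ncard = ∑ i, (#{t | gg.cyc i t ∈ S} + if gg.pend i ∈ S then 1 else 0) +
      #{d : G.Dart | gg.inter d.fst d.snd d.adj ∈ S} + ∑ t, #{a | gg.p3 t a ∈ S} := by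
  rw [← Set.ncard_preimage_of_injective_subset_range gg.pieceEquiv.injective (by simp),
    show gg.pieceEquiv ⁻¹' S = ↑({x | gg.pieceEquiv x ∈ S} : Finset _) by ext; simp,
    Set.ncard_coe_finset, Piece.card_filter]
  rfl

theorem isVertexCover_iff {S : Set W} :
    IsVertexCover H S ↔
      (∀ i t, gg.cyc i t ∈ S ∨ gg.cyc i (t + 1) ∈ S) ∧
      (∀ i, gg.pend i ∈ S ∨ gg.cyc i (gg.ρ i) ∈ S) ∧
      (∀ i j h, gg.cyc i (gg.β i j h) ∈ S ∨ gg.inter i j h ∈ S) ∧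
      (∀ i j h, gg.inter i j h ∈ S ∨ gg.inter j i (G.adj_symm h) ∈ S) ∧
      (∀ t, (gg.p3 t 0 ∈ S ∨ gg.p3 t 1 ∈ S) ∧ (gg.p3 t 1 ∈ S ∨ gg.p3 t 2 ∈ S)) := by
  constructor
  · intro hS
    refine ⟨fun i t => hS ((gg.adj_iff _ _).2 ?_), fun i => hS ((gg.adj_iff _ _).2 ?_),
      fun i j h => hS ((gg.adj_iff _ _).2 ?_), fun i j h => hS ((gg.adj_iff _ _).2 ?_),
      fun t => ⟨hS ((gg.adj_iff _ _).2 ?_), hS ((gg.adj_iff _ _).2 ?_)⟩⟩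
    · exact .inl ⟨i, t, .inl ⟨rfl, rfl⟩⟩
    · exact .inr <| .inl ⟨i, .inl ⟨rfl, rfl⟩⟩
    · exact .inr <| .inr <| .inl ⟨i, j, h, .inl ⟨rfl, rfl⟩⟩
    · exact .inr <| .inr <| .inr <| .inl ⟨i, j, h, rfl, rfl⟩
    · exact .inr <| .inr <| .inr <| .inr ⟨t, .inl ⟨rfl, rfl⟩⟩
    · exact .inr <| .inr <| .inr <| .inr ⟨t, .inr <| .inr <| .inl ⟨rfl, rfl⟩⟩
  · rintro ⟨hcyc, hpend, hβ, hmid, hp3⟩ x y hxy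
    rcases (gg.adj_iff x y).1 hxy with ⟨i, t, ⟨rfl, rfl⟩ | ⟨rfl, rfl⟩⟩ |
      ⟨i, ⟨rfl, rfl⟩ | ⟨rfl, rfl⟩⟩ | ⟨i, j, h, ⟨rfl, rfl⟩ | ⟨rfl, rfl⟩⟩ |
      ⟨i, j, h, rfl, rfl⟩ |
      ⟨t, ⟨rfl, rfl⟩ | ⟨rfl, rfl⟩ | ⟨rfl, rfl⟩ | ⟨rfl, rfl⟩⟩
    exacts [hcyc i t, (hcyc i t).symm, hpend i, (hpend i).symm, hβ i j h, (hβ i j h).symm,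
      hmid i j h, (hp3 t).1, (hp3 t).1.symm, (hp3 t).2, (hp3 t).2.symm]

theorem inter_mem_of_card_add_le [∀ i, NeZero (b i)] {S : Set W} [DecidablePred (· ∈ S)]
    (hS : IsVertexCover H S) {i : Fin n}
    (hi : #{t | gg.cyc i t ∈ S} + (if gg.pend i ∈ S then 1 else 0) ≤ b i) (j : Fin n)
    (h : G.Adj i j) : gg.inter i j h ∈ S := by
  obtain ⟨hcyc, hpend, hβ, -, -⟩ := gg.isVertexCover_iff.1 hS
  set T : Finset (ZMod (2 * b i)) := {t | gg.cyc i t ∈ S}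
  have hcover : ∀ t, t ∈ T ∨ t + 1 ∈ T := by simpa [T] using hcyc i
  have hb := ZMod.le_card_of_forall_mem_or_add_one_mem hcover
  have hpend_notMem : gg.pend i ∉ S := fun hp => by rw [if_pos hp] at hi; omega
  rw [if_neg hpend_notMem] at hi
  have hparity := ZMod.mem_iff_even_val_iff_of_forall_add_one_mem_iff
    (ZMod.add_one_mem_iff_of_card_le hcover (by omega))
  have hρ : gg.ρ i ∈ T := by simpa [T, hpend_notMem] using hpend i
  have h0 : 0 ∉ T := by
    have := (hparity _).1 hρ
    have := Nat.not_even_iff_odd.2 (gg.ρ_odd i)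
    tauto
  have hβT : gg.β i j h ∉ T := by
    rw [hparity]
    have := gg.β_even i j h
    tauto
  exact (hβ i j h).resolve_left (by simpa [T] using hβT)

def Piece.liftCover (C : Set (Fin n)) : Piece G f b → Prop
  | .inl ⟨i, t⟩ => Even t.val ↔ i ∈ C
  | .inr (.inl i) => i ∈ C
  | .inr (.inr (.inl ⟨i, j, _⟩)) => i ∉ C ∨ (j ∈ C ∧ i < j)
  | .inr (.inr (.inr (_, a))) => a = 1

noncomputable def liftCover (C : Set (Fin n)) : Set W := gg.pieceEquiv '' {x | x.liftCover C}

theorem isVertexCover_liftCover [∀ i, NeZero (b i)] {C : Set (Fin n)} (hC : IsVertexCover G C) :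
    IsVertexCover H (gg.liftCover C) := by
  have mem : ∀ x : Piece G f b, x.liftCover C → gg.pieceEquiv x ∈ gg.liftCover C :=
    fun x hx => Set.mem_image_of_mem _ hx
  refine gg.isVertexCover_iff.2 ⟨fun i t => ?_, fun i => ?_, fun i j h => ?_, fun i j h => ?_,
    fun t => ⟨.inr (mem (.inr (.inr (.inr (t, 1)))) rfl),
      .inl (mem (.inr (.inr (.inr (t, 1)))) rfl)⟩⟩
  · refine Or.imp (mem (.inl ⟨i, t⟩)) (mem (.inl ⟨i, t + 1⟩)) ?_
    change (Even t.val ↔ i ∈ C) ∨ (Even (t + 1).val ↔ i ∈ C)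
    rw [ZMod.even_val_add_one_iff]
    tauto
  · refine Or.imp (mem (.inr (.inl i))) (mem (.inl ⟨i, gg.ρ i⟩)) ?_
    change i ∈ C ∨ (Even (gg.ρ i).val ↔ i ∈ C)
    have := Nat.not_even_iff_odd.2 (gg.ρ_odd i)
    tauto
  · refine Or.imp (mem (.inl ⟨i, gg.β i j h⟩)) (mem (.inr (.inr (.inl ⟨i, j, h⟩)))) ?_
    change (Even (gg.β i j h).val ↔ i ∈ C) ∨ (i ∉ C ∨ (j ∈ C ∧ i < j))
    have := gg.β_even i j h
    tauto
  · refine Or.imp (mem (.inr (.inr (.inl ⟨i, j, h⟩))))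
      (mem (.inr (.inr (.inl ⟨j, i, h.symm⟩)))) ?_
    change (i ∉ C ∨ (j ∈ C ∧ i < j)) ∨ (j ∉ C ∨ (i ∈ C ∧ j < i))
    have := hC h
    rcases lt_or_gt_of_ne h.ne with hij | hij <;> tauto

theorem ncard_liftCover_le [∀ i, NeZero (b i)] [DecidableRel G.Adj] {C : Set (Fin n)}
    (hC : IsVertexCover G C) :
    (gg.liftCover C).ncard ≤ C.ncard + f + #G.edgeFinset + ∑ i, b i := by
  classical
  rw [liftCover, Set.ncard_image_of_injective _ gg.pieceEquiv.injective,
    show {x | Piece.liftCover C x} = ↑({x | x.liftCover C} : Finset (Piece G f b)) by ext; simp,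
    Set.ncard_coe_finset, Piece.card_filter]
  have hcyc : ∀ i, #{t | Piece.liftCover C (.inl ⟨i, t⟩ : Piece G f b)} = b i := by
    intro i
    by_cases hi : i ∈ C
    · simpa only [Piece.liftCover, hi, iff_true] using ZMod.card_filter_even_val
    · simpa only [Piece.liftCover, hi, iff_false] using ZMod.card_filter_not_even_val
  have hpend : ∑ i, (if Piece.liftCover C (.inr (.inl i) : Piece G f b) then 1 else 0) =
      C.ncard := by
    rw [← Finset.card_filter, Set.ncard_eq_toFinset_card']
    congr 1
    ext
    simp only [mem_filter, mem_univ, true_and, Set.mem_toFinset]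
    rfl
  have hinter : #{d : G.Dart | Piece.liftCover C
      (.inr (.inr (.inl ⟨d.fst, d.snd, d.adj⟩)) : Piece G f b)} ≤ #G.edgeFinset := by
    refine SimpleGraph.card_le_card_edgeFinset_of_forall_symm_notMem fun d hd hd' => ?_
    simp only [mem_filter, mem_univ, true_and] at hd hd'
    change d.fst ∉ C ∨ (d.snd ∈ C ∧ d.fst < d.snd) at hd
    change d.snd ∉ C ∨ (d.fst ∈ C ∧ d.snd < d.fst) at hd'
    have := hC d.adj
    have := lt_asymm (a := d.fst) (b := d.snd)
    tauto
  have hp3 : ∀ t, #{a | Piece.liftCover C (.inr (.inr (.inr (t, a))) : Piece G f b)} = 1 :=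
    fun t => card_eq_one.2 ⟨1, by
      ext
      simp only [mem_filter, mem_univ, true_and, mem_singleton]
      rfl⟩
  simp only [sum_add_distrib, hcyc, hpend, hp3, sum_const, card_univ, Fintype.card_fin,
    smul_eq_mul, mul_one]
  omega

theorem exists_isVertexCover_ncard_add_le [∀ i, NeZero (b i)] [DecidableRel G.Adj]
    (gg : GadgetGraph G f b H) {S : Set W} (hS : IsVertexCover H S) :
    ∃ C : Set (Fin n), IsVertexCover G C ∧
      C.ncard + f + #G.edgeFinset + ∑ i, b i ≤ S.ncard := by
  classical
  obtain ⟨hcyc, -, -, hmid, hp3⟩ := gg.isVertexCover_iff.1 hS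
  set c : Fin n → ℕ := fun i => #{t | gg.cyc i t ∈ S} + if gg.pend i ∈ S then 1 else 0
  set heavy : Finset (Fin n) := {i | b i < c i}
  set I : Finset G.Dart := {d | gg.inter d.fst d.snd d.adj ∈ S}
  set double : Finset (Sym2 (Fin n)) :=
    {e ∈ G.edgeFinset | ∀ d : G.Dart, d.edge = e → d ∈ I}
  have hlight : ∀ i j (h : G.Adj i j), i ∉ heavy → j ∉ heavy → s(i, j) ∈ double := by
    intro i j hij hi hj
    refine mem_filter.2 ⟨SimpleGraph.mem_edgeFinset.2 hij, fun d hd => ?_⟩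
    have hfst : d.fst ∉ heavy := by
      rcases Sym2.mem_iff.1 (hd ▸ Sym2.mem_mk_left d.fst d.snd : d.fst ∈ s(i, j)) with h | h <;>
        rwa [h]
    simp only [heavy, mem_filter, mem_univ, true_and, not_lt] at hfst
    exact mem_filter.2 ⟨mem_univ _, gg.inter_mem_of_card_add_le hS hfst _ _⟩
  refine ⟨↑(heavy ∪ double.image Sym2.inf), G.isVertexCover_union_image_inf hlight, ?_⟩
  have hvert : ∑ i, b i + #heavy ≤ ∑ i, c i := by
    rw [card_filter, ← sum_add_distrib]
    refine sum_le_sum fun i _ => ?_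
    have := ZMod.le_card_of_forall_mem_or_add_one_mem (T := {t | gg.cyc i t ∈ S})
      (by simpa using hcyc i)
    simp only [c]
    split_ifs <;> omega
  have hinter : #G.edgeFinset + #double ≤ #I :=
    G.card_edgeFinset_add_card_filter_le fun d => by simpa [I] using hmid d.fst d.snd d.adj
  have hpath : f ≤ ∑ t, #{a | gg.p3 t a ∈ S} := by
    calc f = ∑ _ : Fin f, 1 := by simp
      _ ≤ _ := sum_le_sum fun t _ => card_pos.2 <| by
        rcases (hp3 t).1 with h | h
        exacts [⟨0, by simpa using h⟩, ⟨1, by simpa using h⟩]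
  have hC : #(heavy ∪ double.image Sym2.inf) ≤ #heavy + #double :=
    (card_union_le _ _).trans (Nat.add_le_add_left card_image_le _)
  rw [Set.ncard_coe_finset, gg.ncard_eq S]
  change _ ≤ ∑ i, c i + #I + _
  omega

end GadgetGraph

theorem stmt4_general {n : ℕ} (G : SimpleGraph (Fin n)) [DecidableRel G.Adj]
    (f : ℕ) (b : Fin n → ℕ) {W : Type*} (H : SimpleGraph W)
    (hb2 : ∀ i, 2 ≤ b i)
    (gg : GadgetGraph G f b H)
    (k : ℕ) :
    (∃ C : Set (Fin n), IsVertexCover G C ∧ C.ncard ≤ k) ↔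
    (∃ S : Set W, IsVertexCover H S ∧
      S.ncard ≤ k + f + G.edgeFinset.card + ∑ i, b i) := by
  have : ∀ i, NeZero (b i) := fun i => ⟨by have := hb2 i; omega⟩
  constructor
  · rintro ⟨C, hC, hCk⟩
    exact ⟨gg.liftCover C, gg.isVertexCover_liftCover hC,
      (gg.ncard_liftCover_le hC).trans (by omega)⟩
  · rintro ⟨S, hS, hSk⟩
    obtain ⟨C, hC, hCS⟩ := gg.exists_isVertexCover_ncard_add_le hS
    exact ⟨C, hC, by omega⟩

/-- `G` has a vertex cover of size at most `k` if and only if a gadget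
graph `H` for `(G, f, b)` has a vertex cover of size at most `k + f + m + ∑ i, b i`. -/
theorem stmt4 {n : ℕ} (G : SimpleGraph (Fin n)) [DecidableRel G.Adj]
    (f : ℕ) (b : Fin n → ℕ) {W : Type*} (H : SimpleGraph W)
    (hniso : ∀ i : Fin n, ∃ j, G.Adj i j)
    (hb2 : ∀ i, 2 ≤ b i)
    (hbdeg : ∀ i, b i = G.degree i ∨ b i = G.degree i + 1 ∨ b i = G.degree i + 2)
    (gg : GadgetGraph G f b H)
    (k : ℕ) :
    (∃ C : Set (Fin n), IsVertexCover G C ∧ C.ncard ≤ k) ↔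
    (∃ S : Set W, IsVertexCover H S ∧
      S.ncard ≤ k + f + G.edgeFinset.card + ∑ i, b i) :=
  stmt4_general G f b H hb2 gg k
end
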